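/- Let k be a field and f, g polynomial automorphisms of A^n_k of degree ≥ 2 such that the indeterminacy loci at infinity satisfy I_g ∩ I_{f⁻¹} = ∅. Then deg(g∘f) = deg(g)·deg(f). -/

import Mathlib

open MvPolynomial

/-- Composition of polynomial endomorphisms of affine `n`-space. -/
noncomputable def mvComp {k : Type*} [CommSemiring k] {n : ℕ}
    (g f : Fin n → MvPolynomial (Fin n) k) : Fin n → MvPolynomial (Fin n) k :=
  fun i => MvPolynomial.bind₁ f (g i)

/-- The degree of a polynomial endomorphism of affine `n`-space. -/
noncomputable def mvDeg {k : Type*} [CommSemiring k] {n : ℕ}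
    (f : Fin n → MvPolynomial (Fin n) k) : ℕ :=
  Finset.univ.sup fun i => (f i).totalDegree

/-- The highest homogeneous part of a polynomial endomorphism. -/
noncomputable def topPart {k : Type*} [CommSemiring k] {n : ℕ}
    (f : Fin n → MvPolynomial (Fin n) k) : Fin n → MvPolynomial (Fin n) k :=
  fun i => MvPolynomial.homogeneousComponent (mvDeg f) (f i)

/-!
Let `D = deg f` and `T` the top part of `f`. If `deg p ≤ e`, the degree-`e D` component of
`p ∘ f` is `p_e ∘ T`, where `p_e` is the degree-`e` component of `p`. Applied to
`f⁻¹ ∘ f = id`, whose degree-`deg f⁻¹ · D` component vanishes because `deg f⁻¹ · D ≠ 1`,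
this gives `f⁻¹_top ∘ T = 0`, i.e. `X_f ⊆ I_{f⁻¹}`. Choosing `y` with `T y ≠ 0`, the
hypothesis `I_g ∩ I_{f⁻¹} = ∅` then forces `g_top (T y) ≠ 0`, so the degree-`deg g · D`
component `g_top ∘ T` of `g ∘ f` is nonzero.
-/

namespace MvPolynomial

variable {σ τ R : Type*} [CommSemiring R]

theorem homogeneousComponent_mul_of_totalDegree_le {p q : MvPolynomial σ R} {a b : ℕ}
    (hp : p.totalDegree ≤ a) (hq : q.totalDegree ≤ b) :
    homogeneousComponent (a + b) (p * q) =
      homogeneousComponent a p * homogeneousComponent b q := by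
  classical
  ext d
  rw [coeff_homogeneousComponent]
  split_ifs with hd
  · rw [coeff_mul, coeff_mul]
    refine Finset.sum_congr rfl fun x hx => ?_
    have hsum : x.1.degree + x.2.degree = a + b := by
      rw [← hd, ← Finset.HasAntidiagonal.mem_antidiagonal.mp hx, map_add]
    rw [coeff_homogeneousComponent, coeff_homogeneousComponent]
    rcases lt_trichotomy x.1.degree a with h | h | h
    · rw [coeff_eq_zero_of_totalDegree_lt (d := x.2)
        (by simp only [← Finsupp.degree_apply]; omega), mul_zero, ite_self, mul_zero]
    · rw [if_pos h, if_pos (by omega)]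
    · rw [coeff_eq_zero_of_totalDegree_lt (d := x.1)
        (by simp only [← Finsupp.degree_apply]; omega), zero_mul, if_neg h.ne', zero_mul]
  · rw [((homogeneousComponent_isHomogeneous a p).mul
      (homogeneousComponent_isHomogeneous b q)).coeff_eq_zero hd]

theorem homogeneousComponent_prod_of_totalDegree_le {ι : Type*} (s : Finset ι)
    {F : ι → MvPolynomial σ R} {e : ι → ℕ} (h : ∀ i ∈ s, (F i).totalDegree ≤ e i) :
    homogeneousComponent (∑ i ∈ s, e i) (∏ i ∈ s, F i) =
      ∏ i ∈ s, homogeneousComponent (e i) (F i) := by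
  classical
  induction s using Finset.induction_on with
  | empty => simp [homogeneousComponent_eq_self (isHomogeneous_one σ R)]
  | insert a s ha ih =>
    rw [Finset.forall_mem_insert] at h
    rw [Finset.sum_insert ha, Finset.prod_insert ha, Finset.prod_insert ha,
      homogeneousComponent_mul_of_totalDegree_le h.1
        ((totalDegree_finsetProd s F).trans (Finset.sum_le_sum h.2)), ih h.2]

theorem homogeneousComponent_pow_of_totalDegree_le {u : MvPolynomial σ R} {d : ℕ}
    (hu : u.totalDegree ≤ d) (m : ℕ) :
    homogeneousComponent (m * d) (u ^ m) = homogeneousComponent d u ^ m := by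
  simpa using homogeneousComponent_prod_of_totalDegree_le (Finset.range m)
    (F := fun _ => u) (e := fun _ => d) fun _ _ => hu

section Substitution

variable {f : σ → MvPolynomial τ R} {D : ℕ}

theorem totalDegree_bind₁_monomial_le (hf : ∀ i, (f i).totalDegree ≤ D) (v : σ →₀ ℕ) (c : R) :
    (bind₁ f (monomial v c)).totalDegree ≤ v.degree * D := by
  rw [bind₁_monomial, Finsupp.degree_apply, Finset.sum_mul]
  refine (totalDegree_mul _ _).trans ?_
  rw [totalDegree_C, zero_add]
  exact (totalDegree_finsetProd _ _).trans <| Finset.sum_le_sum fun i _ =>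
    (totalDegree_pow _ _).trans (Nat.mul_le_mul_left _ (hf i))

theorem totalDegree_bind₁_le (hf : ∀ i, (f i).totalDegree ≤ D) (p : MvPolynomial σ R) :
    (bind₁ f p).totalDegree ≤ p.totalDegree * D := by
  conv_lhs => rw [p.as_sum, map_sum]
  exact totalDegree_finsetSum_le fun v hv =>
    (totalDegree_bind₁_monomial_le hf v _).trans (Nat.mul_le_mul_right _ (le_totalDegree hv))

theorem homogeneousComponent_bind₁_monomial (hf : ∀ i, (f i).totalDegree ≤ D) (hD : 0 < D)
    {v : σ →₀ ℕ} {e : ℕ} (hv : v.degree ≤ e) (c : R) :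
    homogeneousComponent (e * D) (bind₁ f (monomial v c)) =
      bind₁ (fun i => homogeneousComponent D (f i)) (homogeneousComponent e (monomial v c)) := by
  rw [homogeneousComponent_of_mem (isHomogeneous_monomial c rfl)]
  rcases hv.lt_or_eq with hlt | rfl
  · rw [if_neg hlt.ne', map_zero]
    exact homogeneousComponent_eq_zero _ _ <| (totalDegree_bind₁_monomial_le hf v c).trans_lt
      (Nat.mul_lt_mul_of_pos_right hlt hD)
  · rw [if_pos rfl, bind₁_monomial, bind₁_monomial, homogeneousComponent_C_mul,
      Finsupp.degree_apply, Finset.sum_mul,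
      homogeneousComponent_prod_of_totalDegree_le _ fun i _ =>
        (totalDegree_pow _ _).trans (Nat.mul_le_mul_left _ (hf i))]
    simp_rw [homogeneousComponent_pow_of_totalDegree_le (hf _)]

theorem homogeneousComponent_bind₁ (hf : ∀ i, (f i).totalDegree ≤ D) (hD : 0 < D)
    {p : MvPolynomial σ R} {e : ℕ} (hp : p.totalDegree ≤ e) :
    homogeneousComponent (e * D) (bind₁ f p) =
      bind₁ (fun i => homogeneousComponent D (f i)) (homogeneousComponent e p) := by
  conv_lhs => rw [p.as_sum]
  conv_rhs => rw [p.as_sum]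
  simp only [map_sum]
  exact Finset.sum_congr rfl fun v hv =>
    homogeneousComponent_bind₁_monomial hf hD ((le_totalDegree hv).trans hp) _

theorem homogeneousComponent_totalDegree_ne_zero {p : MvPolynomial σ R} (hp : p ≠ 0) :
    homogeneousComponent p.totalDegree p ≠ 0 := by
  obtain ⟨v, hv, hdeg⟩ := Finset.exists_mem_eq_sup p.support (support_nonempty.mpr hp)
    fun s => s.sum fun _ e => e
  intro h
  have := congrArg (coeff v) h
  rw [coeff_homogeneousComponent, if_pos (show v.degree = p.totalDegree from hdeg.symm),
    coeff_zero] at this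
  exact mem_support_iff.mp hv this

theorem eval_bind₁ (x : τ → R) (f : σ → MvPolynomial τ R) (p : MvPolynomial σ R) :
    eval x (bind₁ f p) = eval (fun i => eval x (f i)) p :=
  eval₂Hom_bind₁ _ _ _ _

end Substitution

end MvPolynomial

section PolynomialMaps

variable {k : Type*} [CommSemiring k] {n : ℕ}

theorem totalDegree_le_mvDeg (f : Fin n → MvPolynomial (Fin n) k) (i : Fin n) :
    (f i).totalDegree ≤ mvDeg f :=
  Finset.le_sup (f := fun i => (f i).totalDegree) (Finset.mem_univ i)

theorem mvDeg_mvComp_le (g f : Fin n → MvPolynomial (Fin n) k) :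
    mvDeg (mvComp g f) ≤ mvDeg g * mvDeg f :=
  Finset.sup_le fun i _ => (totalDegree_bind₁_le (totalDegree_le_mvDeg f) (g i)).trans
    (Nat.mul_le_mul_right _ (totalDegree_le_mvDeg g i))

theorem homogeneousComponent_bind₁_eq_bind₁_topPart (f : Fin n → MvPolynomial (Fin n) k)
    (hf : 0 < mvDeg f) {p : MvPolynomial (Fin n) k} {e : ℕ} (hp : p.totalDegree ≤ e) :
    homogeneousComponent (e * mvDeg f) (bind₁ f p) =
      bind₁ (topPart f) (homogeneousComponent e p) :=
  homogeneousComponent_bind₁ (totalDegree_le_mvDeg f) hf hp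

theorem exists_topPart_ne_zero {f : Fin n → MvPolynomial (Fin n) k} (hf : 0 < mvDeg f) :
    ∃ i, topPart f i ≠ 0 := by
  have : Nonempty (Fin n) := by
    by_contra h
    simp [mvDeg, Finset.univ_eq_empty_iff.mpr (not_nonempty_iff.mp h)] at hf
  obtain ⟨i, -, hi⟩ := Finset.exists_mem_eq_sup Finset.univ Finset.univ_nonempty
    fun i => (f i).totalDegree
  refine ⟨i, ?_⟩
  have hfi : f i ≠ 0 := by
    rintro h
    simp [mvDeg, hi, h] at hf
  simpa [topPart, mvDeg, hi] using homogeneousComponent_totalDegree_ne_zero hfi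

/-- `X_f ⊆ I_{f⁻¹}`. -/
theorem bind₁_topPart_topPart_eq_zero {f finv : Fin n → MvPolynomial (Fin n) k}
    (hinv : ∀ i, bind₁ f (finv i) = X i) (hf : 2 ≤ mvDeg f) (j : Fin n) :
    bind₁ (topPart f) (topPart finv j) = 0 := by
  rw [topPart, ← homogeneousComponent_bind₁_eq_bind₁_topPart f (by omega)
    (totalDegree_le_mvDeg finv j), hinv, homogeneousComponent_of_mem (isHomogeneous_X k j),
    if_neg]
  rcases Nat.eq_zero_or_pos (mvDeg finv) with h | h
  · simp [h]
  · nlinarith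

end PolynomialMaps

theorem stmt_12_general (k : Type*) [Field k] [IsAlgClosed k] (n : ℕ)
    (f finv g : Fin n → MvPolynomial (Fin n) k)
    (hf1 : ∀ i, MvPolynomial.bind₁ f (finv i) = MvPolynomial.X i)
    (hdf : 2 ≤ mvDeg f)
    -- `I_g ∩ I_{f⁻¹} = ∅` at infinity
    (hsep : ∀ y : Fin n → k, y ≠ 0 →
      (∃ i, MvPolynomial.eval y (topPart g i) ≠ 0) ∨
      (∃ i, MvPolynomial.eval y (topPart finv i) ≠ 0)) :
    mvDeg (mvComp g f) = mvDeg g * mvDeg f := by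
  obtain ⟨i₀, hi₀⟩ := exists_topPart_ne_zero (f := f) (by omega)
  obtain ⟨y, hy⟩ : ∃ y, eval y (topPart f i₀) ≠ 0 := by
    by_contra! h
    exact hi₀ (MvPolynomial.funext fun y => by simp [h])
  obtain ⟨i, hi⟩ : ∃ i, bind₁ (topPart f) (topPart g i) ≠ 0 := by
    rcases hsep (fun j => eval y (topPart f j)) (fun h => hy (congrFun h i₀))
      with ⟨i, hi⟩ | ⟨j, hj⟩
    · exact ⟨i, fun h => hi (by rw [← eval_bind₁, h, map_zero])⟩
    · exact (hj (by rw [← eval_bind₁, bind₁_topPart_topPart_eq_zero hf1 hdf, map_zero])).elim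
  rw [topPart, ← homogeneousComponent_bind₁_eq_bind₁_topPart f (by omega)
    (totalDegree_le_mvDeg g i)] at hi
  refine (mvDeg_mvComp_le g f).antisymm ?_
  calc mvDeg g * mvDeg f ≤ (bind₁ f (g i)).totalDegree :=
        not_lt.mp (mt (homogeneousComponent_eq_zero _ _) hi)
    _ ≤ mvDeg (mvComp g f) := totalDegree_le_mvDeg (mvComp g f) i

theorem stmt_12 (k : Type*) [Field k] [IsAlgClosed k] (n : ℕ)
    (f finv g ginv : Fin n → MvPolynomial (Fin n) k)
    (hf1 : ∀ i, MvPolynomial.bind₁ f (finv i) = MvPolynomial.X i)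
    (hf2 : ∀ i, MvPolynomial.bind₁ finv (f i) = MvPolynomial.X i)
    (hg1 : ∀ i, MvPolynomial.bind₁ g (ginv i) = MvPolynomial.X i)
    (hg2 : ∀ i, MvPolynomial.bind₁ ginv (g i) = MvPolynomial.X i)
    (hdf : 2 ≤ mvDeg f) (hdg : 2 ≤ mvDeg g)
    -- `I_g ∩ I_{f⁻¹} = ∅` at infinity
    (hsep : ∀ y : Fin n → k, y ≠ 0 →
      (∃ i, MvPolynomial.eval y (topPart g i) ≠ 0) ∨
      (∃ i, MvPolynomial.eval y (topPart finv i) ≠ 0)) :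
    mvDeg (mvComp g f) = mvDeg g * mvDeg f :=
  stmt_12_general k n f finv g hf1 hdf hsep
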